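/- arXiv:1904.12154 — 2 statements merged into one kernel-verified Lean document; each statement's English description precedes it below -/
import Mathlib

section
/- Let m ≥ 3. Fisher's third k-statistic k₃ = (m²/((m−1)(m−2))) · (1/m)∑ⱼ (Xⱼ − X̄)³ is an unbiased estimator of the third cumulant of a single variable: 𝔼[k₃] = 𝔼[X³] − 3𝔼[X²]𝔼[X] + 2𝔼[X]³. -/
/-!
Both sides are unchanged when every `Xᵢ` is replaced by `Yᵢ = Xᵢ - 𝔼[X]`, the right-hand side
being the third central moment `κ = 𝔼[Y³]`. For the centred family,
`∑ⱼ (Yⱼ - Ȳ)³ = ∑ⱼ Yⱼ³ - (3/m) ∑ᵢⱼ YᵢYⱼ² + (2/m²) ∑ᵢⱼₖ YᵢYⱼYₖ`, and independence kills every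
mixed moment `𝔼[YᵢYⱼYₖ]` in which one index differs from the other two. Each of the three sums
therefore has expectation `m κ`, so `𝔼[∑ⱼ (Yⱼ - Ȳ)³] = (m - 3 + 2/m) κ = (m-1)(m-2)/m · κ`.
-/

open MeasureTheory ProbabilityTheory Finset
open scoped ENNReal

lemma MeasureTheory.MemLp.integrable_mul_mul {Ω : Type*} [MeasurableSpace Ω] {μ : Measure Ω}
    {f g h : Ω → ℝ} (hf : MemLp f 3 μ) (hg : MemLp g 3 μ) (hh : MemLp h 3 μ) :
    Integrable (fun ω => f ω * g ω * h ω) μ := by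
  have hfgh := MemLp.prod' (s := univ) (f := ![f, g, h]) (p := fun _ => 3) (μ := μ)
    (by intro i _; fin_cases i <;> assumption)
  have hexp : (∑ _i : Fin 3, (3 : ℝ≥0∞)⁻¹)⁻¹ = 1 := by simp [ENNReal.mul_inv_cancel]
  rw [hexp, memLp_one_iff_integrable] at hfgh
  simpa [Fin.prod_univ_three] using hfgh

lemma sum_sub_mean_pow_three {ι : Type*} [Fintype ι] (y : ι → ℝ) :
    ∑ j, (y j - (Fintype.card ι : ℝ)⁻¹ * ∑ i, y i) ^ 3 =
      ∑ j, y j ^ 3 - 3 * (Fintype.card ι : ℝ)⁻¹ * ∑ i, ∑ j, y i * y j * y j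
        + 2 * (Fintype.card ι : ℝ)⁻¹ ^ 2 * ∑ i, ∑ j, ∑ k, y i * y j * y k := by
  have h2 : ∑ i, ∑ j, y i * y j * y j = (∑ i, y i) * ∑ j, y j ^ 2 := by
    simp only [sum_mul_sum, sq, mul_assoc]
  have h3 : ∑ i, ∑ j, ∑ k, y i * y j * y k = (∑ i, y i) ^ 3 := by
    rw [pow_three', sum_mul_sum, sum_mul]
    simp only [sum_mul]
    simp only [mul_sum]
  rw [h2, h3]
  set n : ℝ := (Fintype.card ι : ℝ)
  set S := ∑ i, y i
  have hexpand : ∀ j, (y j - n⁻¹ * S) ^ 3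
      = y j ^ 3 - 3 * (n⁻¹ * S) * y j ^ 2 + 3 * (n⁻¹ * S) ^ 2 * y j - (n⁻¹ * S) ^ 3 :=
    fun j => by ring
  simp only [hexpand, sum_add_distrib, sum_sub_distrib, ← mul_sum, sum_const, card_univ,
    nsmul_eq_mul]
  rcases eq_or_ne n 0 with hn | hn
  · simp [hn]
  · field_simp
    ring

lemma sub_mean_sub_const {ι : Type*} [Fintype ι] [Nonempty ι] (y : ι → ℝ) (c : ℝ) (j : ι) :
    (y j - c) - (Fintype.card ι : ℝ)⁻¹ * ∑ i, (y i - c)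
      = y j - (Fintype.card ι : ℝ)⁻¹ * ∑ i, y i := by
  have hn : (Fintype.card ι : ℝ) ≠ 0 := by positivity
  rw [sum_sub_distrib, sum_const, card_univ, nsmul_eq_mul]
  field_simp
  ring

section ThirdMoments

variable {Ω : Type*} [MeasurableSpace Ω] {μ : Measure Ω}

lemma integral_sub_integral_pow_three [IsProbabilityMeasure μ] {X : Ω → ℝ} (hX : MemLp X 3 μ) :
    ∫ ω, (X ω - ∫ ω, X ω ∂μ) ^ 3 ∂μ
      = ∫ ω, X ω ^ 3 ∂μ - 3 * (∫ ω, X ω ^ 2 ∂μ) * (∫ ω, X ω ∂μ) + 2 * (∫ ω, X ω ∂μ) ^ 3 := by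
  set a := ∫ ω, X ω ∂μ
  have h1 : Integrable X μ := hX.integrable (by norm_num)
  have h2 : Integrable (fun ω => X ω ^ 2) μ := (hX.mono_exponent (by norm_num)).integrable_sq
  have h3 : Integrable (fun ω => X ω ^ 3) μ :=
    (hX.integrable_mul_mul hX hX).congr (.of_forall fun ω => by ring)
  have hexpand : ∀ ω, (X ω - a) ^ 3 = X ω ^ 3 - 3 * a * X ω ^ 2 + 3 * a ^ 2 * X ω - a ^ 3 :=
    fun ω => by ring
  simp only [hexpand]
  rw [integral_sub, integral_add, integral_sub, integral_const_mul, integral_const_mul,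
    integral_const, probReal_univ, one_smul]
  · ring
  all_goals fun_prop

variable {ι : Type*} {Y : ι → Ω → ℝ}

lemma integral_mul_mul_eq_zero_of_ne (hindep : iIndepFun Y μ) (hmeas : ∀ i, AEMeasurable (Y i) μ)
    {i j k : ι} (hk : ∫ ω, Y k ω ∂μ = 0) (hik : i ≠ k) (hjk : j ≠ k) :
    ∫ ω, Y i ω * Y j ω * Y k ω ∂μ = 0 :=
  ((hindep.indepFun_mul_left₀ hmeas i j k hik hjk).integral_fun_mul_eq_mul_integral
    ((hmeas i).mul (hmeas j)).aestronglyMeasurable (hmeas k).aestronglyMeasurable).trans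
    (by rw [hk, mul_zero])

lemma integral_mul_mul_of_centered [DecidableEq ι] (hindep : iIndepFun Y μ)
    (hmeas : ∀ i, AEMeasurable (Y i) μ) (hcenter : ∀ i, ∫ ω, Y i ω ∂μ = 0) (i j k : ι) :
    ∫ ω, Y i ω * Y j ω * Y k ω ∂μ = if i = j ∧ j = k then ∫ ω, Y i ω ^ 3 ∂μ else 0 := by
  split_ifs with h
  · obtain ⟨rfl, rfl⟩ := h
    simp only [pow_three']
  by_cases hik : i = k
  · subst hik
    have hij : i ≠ j := fun hij => h ⟨hij, hij.symm⟩
    exact (integral_congr_ae (.of_forall fun ω => by ring)).trans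
      (integral_mul_mul_eq_zero_of_ne hindep hmeas (hcenter j) hij hij)
  by_cases hjk : j = k
  · subst hjk
    exact (integral_congr_ae (.of_forall fun ω => by ring)).trans
      (integral_mul_mul_eq_zero_of_ne hindep hmeas (hcenter i) (Ne.symm hik) (Ne.symm hik))
  exact integral_mul_mul_eq_zero_of_ne hindep hmeas (hcenter k) hik hjk

lemma integral_sum_sub_mean_pow_three_of_centered [Fintype ι] (hindep : iIndepFun Y μ)
    (hY : ∀ i, MemLp (Y i) 3 μ) (hcenter : ∀ i, ∫ ω, Y i ω ∂μ = 0) {κ : ℝ}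
    (hκ : ∀ i, ∫ ω, Y i ω ^ 3 ∂μ = κ) :
    ∫ ω, ∑ j, (Y j ω - (Fintype.card ι : ℝ)⁻¹ * ∑ i, Y i ω) ^ 3 ∂μ
      = ((Fintype.card ι : ℝ) - 1) * ((Fintype.card ι : ℝ) - 2) / (Fintype.card ι : ℝ) * κ := by
  classical
  have hprod : ∀ i j k, Integrable (fun ω => Y i ω * Y j ω * Y k ω) μ :=
    fun i j k => (hY i).integrable_mul_mul (hY j) (hY k)
  have hcube : ∀ i, Integrable (fun ω => Y i ω ^ 3) μ :=
    fun i => (hprod i i i).congr (.of_forall fun ω => by ring)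
  simp_rw [sum_sub_mean_pow_three]
  rw [integral_add (by fun_prop) (by fun_prop), integral_sub (by fun_prop) (by fun_prop),
    integral_const_mul, integral_const_mul]
  simp (disch := fun_prop) only [integral_finsetSum,
    integral_mul_mul_of_centered hindep (fun i => (hY i).aemeasurable) hcenter, hκ]
  simp only [ite_and, sum_ite_irrel, sum_const_zero, sum_ite_eq, mem_univ, if_true, sum_const,
    card_univ, nsmul_eq_mul]
  rcases eq_or_ne (Fintype.card ι : ℝ) 0 with hn | hn
  · simp [hn]
  · field_simp
    ring

end ThirdMoments

theorem unbiased_k3 {Ω : Type*} [MeasurableSpace Ω] (μ : Measure Ω) [IsProbabilityMeasure μ]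
    (m : ℕ) (hm : 3 ≤ m)
    (X : Fin m → Ω → ℝ)
    (hindep : iIndepFun X μ)
    (hident : ∀ i, IdentDistrib (X i) (X ⟨0, by omega⟩) μ μ)
    (hX : MemLp (X ⟨0, by omega⟩) 3 μ) :
    (∫ ω, ((m:ℝ)^2 / (((m:ℝ)-1) * ((m:ℝ)-2))) * ((m:ℝ)⁻¹ * ∑ j, (X j ω - ((m:ℝ)⁻¹ * ∑ i, X i ω))^3) ∂μ) =
      (∫ ω, X ⟨0, by omega⟩ ω^3 ∂μ) - 3 * (∫ ω, X ⟨0, by omega⟩ ω^2 ∂μ) * (∫ ω, X ⟨0, by omega⟩ ω ∂μ) + 2 * (∫ ω, X ⟨0, by omega⟩ ω ∂μ)^3 := by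
  have : Nonempty (Fin m) := ⟨⟨0, by omega⟩⟩
  have hthird := integral_sub_integral_pow_three hX
  set a := ∫ ω, X ⟨0, by omega⟩ ω ∂μ
  have hXi : ∀ i, MemLp (X i) 3 μ := fun i => (hident i).symm.memLp_snd hX
  have hY : ∀ i, MemLp (fun ω => X i ω - a) 3 μ := fun i => (hXi i).sub (memLp_const a)
  have hYindep : iIndepFun (fun i ω => X i ω - a) μ :=
    hindep.comp (fun _ x => x - a) (fun _ => measurable_sub_const a)
  have hcenter : ∀ i, ∫ ω, X i ω - a ∂μ = 0 := fun i => by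
    rw [integral_sub ((hXi i).integrable (by norm_num)) (integrable_const a),
      (hident i).integral_eq, integral_const, probReal_univ, one_smul, sub_self]
  have hκ : ∀ i, ∫ ω, (X i ω - a) ^ 3 ∂μ = ∫ ω, (X ⟨0, by omega⟩ ω - a) ^ 3 ∂μ := fun i =>
    ((hident i).comp ((measurable_sub_const a).pow_const 3)).integral_eq
  have hshift : ∀ ω j, X j ω - (m : ℝ)⁻¹ * ∑ i, X i ω
      = (X j ω - a) - (m : ℝ)⁻¹ * ∑ i, (X i ω - a) :=
    fun ω j => by simpa using (sub_mean_sub_const (X · ω) a j).symm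
  have hsum := integral_sum_sub_mean_pow_three_of_centered hYindep hY hcenter hκ
  rw [Fintype.card_fin] at hsum
  simp_rw [integral_const_mul, hshift]
  rw [hsum, hthird]
  have hm3 : (3 : ℝ) ≤ m := by exact_mod_cast hm
  have hm1 : (m : ℝ) - 1 ≠ 0 := by linarith
  have hm2 : (m : ℝ) - 2 ≠ 0 := by linarith
  field_simp
end

section
/- Let m ≥ 2 and suppose 𝔼[X] = 𝔼[Y] = 0. Then the reduced estimator c₃⁽ᶠ⁾ = (m/(m−1))(\overline{XYZ} − \overline{XY}·Z̄) satisfies 𝔼[c₃⁽ᶠ⁾] = 𝔼[XYZ] − 𝔼[XY]𝔼[Z], which under the hypotheses equals the third multivariate cumulant C₃(x,y,z). -/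
/-!
Put `U i = X i * Y i` and `V i = Z i`: the estimator is then the unbiased sample covariance of the
i.i.d. pairs `(U i, V i)`. Expanding `(∑ i, U i) * (∑ j, V j)`, the `m` diagonal terms have mean
`𝔼[UV]` and, by independence, the `m (m - 1)` off-diagonal ones have mean `𝔼[U] 𝔼[V]`; the factor
`m / (m - 1)` exactly compensates for the latter. Hölder's inequality with exponents `3, 3, 3`
makes every product integrable, and `𝔼[X] = 𝔼[Y] = 0` kills the extra cumulant terms.
-/

open MeasureTheory ProbabilityTheory Finset

namespace MeasureTheory

variable {α 𝕜 : Type*} [MeasurableSpace α] [NormedRing 𝕜] {μ : Measure α} {f g h : α → 𝕜}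

instance : ENNReal.HolderTriple 3 3 (3 / 2) :=
  ⟨by rw [ENNReal.inv_div (by simp) (by simp), ← two_mul, div_eq_mul_inv]⟩

instance : ENNReal.HolderTriple (3 / 2) 3 1 :=
  ⟨by
    rw [ENNReal.inv_div (by simp) (by simp), inv_one, ← one_div, ENNReal.div_add_div_same,
      two_add_one_eq_three]
    exact ENNReal.div_self (by simp) (by simp)⟩

lemma MemLp.mul_of_three (hf : MemLp f 3 μ) (hg : MemLp g 3 μ) : MemLp (f * g) (3 / 2) μ :=
  hg.mul hf

lemma MemLp.integrable_mul_of_three [IsFiniteMeasure μ] (hf : MemLp f 3 μ) (hg : MemLp g 3 μ) :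
    Integrable (f * g) μ :=
  (hf.mul_of_three hg).integrable (by rw [ENNReal.le_div_iff_mul_le (by simp) (by simp)]; norm_num)

lemma MemLp.integrable_mul_mul_of_three (hf : MemLp f 3 μ) (hg : MemLp g 3 μ)
    (hh : MemLp h 3 μ) : Integrable (f * g * h) μ :=
  (hf.mul_of_three hg).integrable_mul hh

end MeasureTheory

namespace ProbabilityTheory.IdentDistrib

variable {α β γ δ : Type*} [MeasurableSpace α] [MeasurableSpace β] [MeasurableSpace γ]
  [MeasurableSpace δ] {μ : Measure α} {ν : Measure β}

lemma pair_fst {f₁ : α → γ} {f₂ : α → δ} {g₁ : β → γ} {g₂ : β → δ}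
    (h : IdentDistrib (fun a => (f₁ a, f₂ a)) (fun b => (g₁ b, g₂ b)) μ ν) :
    IdentDistrib f₁ g₁ μ ν :=
  h.comp measurable_fst

lemma pair_snd {f₁ : α → γ} {f₂ : α → δ} {g₁ : β → γ} {g₂ : β → δ}
    (h : IdentDistrib (fun a => (f₁ a, f₂ a)) (fun b => (g₁ b, g₂ b)) μ ν) :
    IdentDistrib f₂ g₂ μ ν :=
  h.comp measurable_snd

lemma pair_mul [Mul γ] [MeasurableMul₂ γ] {f₁ f₂ : α → γ} {g₁ g₂ : β → γ}
    (h : IdentDistrib (fun a => (f₁ a, f₂ a)) (fun b => (g₁ b, g₂ b)) μ ν) :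
    IdentDistrib (fun a => f₁ a * f₂ a) (fun b => g₁ b * g₂ b) μ ν :=
  h.comp (measurable_fst.mul measurable_snd)

end ProbabilityTheory.IdentDistrib

lemma Fintype.sum_sum_ite_eq_card {ι R : Type*} [Fintype ι] [DecidableEq ι] [CommRing R] (a b : R) :
    ∑ i : ι, ∑ j : ι, (if i = j then a else b) =
      Fintype.card ι * a + Fintype.card ι * (Fintype.card ι - 1) * b := by
  rcases isEmpty_or_nonempty ι with hι | hι
  · simp
  · simp [sum_ite, filter_eq, filter_ne, Nat.cast_pred Fintype.card_pos]
    ring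

section SampleCovariance

variable {Ω ι : Type*} [MeasurableSpace Ω] {μ : Measure Ω} {U V : ι → Ω → ℝ} {U₀ V₀ : Ω → ℝ}

lemma integrable_mul_of_identDistrib_of_indepFun
    (hident : ∀ i, IdentDistrib (fun ω => (U i ω, V i ω)) (fun ω => (U₀ ω, V₀ ω)) μ μ)
    (hindep : Pairwise fun i j => IndepFun (U i) (V j) μ)
    (hU₀ : Integrable U₀ μ) (hV₀ : Integrable V₀ μ) (hUV₀ : Integrable (fun ω => U₀ ω * V₀ ω) μ)
    (i j : ι) :
    Integrable (fun ω => U i ω * V j ω) μ := by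
  rcases eq_or_ne i j with rfl | hij
  · exact (hident i).pair_mul.integrable_iff.mpr hUV₀
  · exact (hindep hij).integrable_mul ((hident i).pair_fst.integrable_iff.mpr hU₀)
      ((hident j).pair_snd.integrable_iff.mpr hV₀)

lemma integral_mul_of_identDistrib_of_indepFun [DecidableEq ι]
    (hident : ∀ i, IdentDistrib (fun ω => (U i ω, V i ω)) (fun ω => (U₀ ω, V₀ ω)) μ μ)
    (hindep : Pairwise fun i j => IndepFun (U i) (V j) μ) (i j : ι) :
    ∫ ω, U i ω * V j ω ∂μ =
      if i = j then ∫ ω, U₀ ω * V₀ ω ∂μ else (∫ ω, U₀ ω ∂μ) * ∫ ω, V₀ ω ∂μ := by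
  split_ifs with hij
  · subst hij
    exact (hident i).pair_mul.integral_eq
  · rw [← (hident i).pair_fst.integral_eq, ← (hident j).pair_snd.integral_eq]
    exact (hindep hij).integral_mul_eq_mul_integral
      (hident i).pair_fst.aestronglyMeasurable_fst (hident j).pair_snd.aestronglyMeasurable_fst

variable [Fintype ι]

lemma integrable_sum_mul_sum_of_identDistrib_of_indepFun
    (hident : ∀ i, IdentDistrib (fun ω => (U i ω, V i ω)) (fun ω => (U₀ ω, V₀ ω)) μ μ)
    (hindep : Pairwise fun i j => IndepFun (U i) (V j) μ)
    (hU₀ : Integrable U₀ μ) (hV₀ : Integrable V₀ μ) (hUV₀ : Integrable (fun ω => U₀ ω * V₀ ω) μ) :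
    Integrable (fun ω => (∑ i, U i ω) * (∑ j, V j ω)) μ := by
  simp_rw [sum_mul_sum]
  exact integrable_finsetSum _ fun i _ => integrable_finsetSum _ fun j _ =>
    integrable_mul_of_identDistrib_of_indepFun hident hindep hU₀ hV₀ hUV₀ i j

lemma integral_sum_mul_sum_of_identDistrib_of_indepFun
    (hident : ∀ i, IdentDistrib (fun ω => (U i ω, V i ω)) (fun ω => (U₀ ω, V₀ ω)) μ μ)
    (hindep : Pairwise fun i j => IndepFun (U i) (V j) μ)
    (hU₀ : Integrable U₀ μ) (hV₀ : Integrable V₀ μ) (hUV₀ : Integrable (fun ω => U₀ ω * V₀ ω) μ) :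
    ∫ ω, (∑ i, U i ω) * (∑ j, V j ω) ∂μ =
      Fintype.card ι * ∫ ω, U₀ ω * V₀ ω ∂μ +
        Fintype.card ι * (Fintype.card ι - 1) * ((∫ ω, U₀ ω ∂μ) * ∫ ω, V₀ ω ∂μ) := by
  classical
  have hint := integrable_mul_of_identDistrib_of_indepFun hident hindep hU₀ hV₀ hUV₀
  simp_rw [sum_mul_sum]
  rw [integral_finsetSum _ fun i _ => integrable_finsetSum _ fun j _ => hint i j]
  simp_rw [integral_finsetSum _ fun j _ => hint _ j,
    integral_mul_of_identDistrib_of_indepFun hident hindep]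
  exact Fintype.sum_sum_ite_eq_card _ _

lemma integral_sum_mul_of_identDistrib
    (hident : ∀ i, IdentDistrib (fun ω => (U i ω, V i ω)) (fun ω => (U₀ ω, V₀ ω)) μ μ)
    (hUV₀ : Integrable (fun ω => U₀ ω * V₀ ω) μ) :
    ∫ ω, ∑ i, U i ω * V i ω ∂μ = Fintype.card ι * ∫ ω, U₀ ω * V₀ ω ∂μ := by
  rw [integral_finsetSum _ fun i _ => (hident i).pair_mul.integrable_iff.mpr hUV₀]
  simp_rw [fun i => (hident i).pair_mul.integral_eq]
  simp

theorem integral_unbiased_sample_covariance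
    (hident : ∀ i, IdentDistrib (fun ω => (U i ω, V i ω)) (fun ω => (U₀ ω, V₀ ω)) μ μ)
    (hindep : Pairwise fun i j => IndepFun (U i) (V j) μ)
    (hU₀ : Integrable U₀ μ) (hV₀ : Integrable V₀ μ) (hUV₀ : Integrable (fun ω => U₀ ω * V₀ ω) μ)
    (hcard : 2 ≤ Fintype.card ι) :
    ∫ ω, ((Fintype.card ι : ℝ) / (Fintype.card ι - 1)) *
        (((Fintype.card ι : ℝ)⁻¹ * ∑ i, U i ω * V i ω) -
          ((Fintype.card ι : ℝ)⁻¹ * ∑ i, U i ω) * ((Fintype.card ι : ℝ)⁻¹ * ∑ i, V i ω)) ∂μ =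
      (∫ ω, U₀ ω * V₀ ω ∂μ) - (∫ ω, U₀ ω ∂μ) * ∫ ω, V₀ ω ∂μ := by
  set n : ℝ := (Fintype.card ι : ℝ) with hn
  have hn2 : (2 : ℝ) ≤ n := by rw [hn]; exact_mod_cast hcard
  have hn0 : n ≠ 0 := (by linarith : 0 < n).ne'
  have hn1 : n - 1 ≠ 0 := (by linarith : 0 < n - 1).ne'
  have hdiag := (integrable_finsetSum univ fun i _ => (hident i).pair_mul.integrable_iff.mpr hUV₀)
  have hcross := integrable_sum_mul_sum_of_identDistrib_of_indepFun hident hindep hU₀ hV₀ hUV₀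
  calc _ = ∫ ω, (n / (n - 1) * n⁻¹) * ∑ i, U i ω * V i ω -
          (n / (n - 1) * n⁻¹ * n⁻¹) * ((∑ i, U i ω) * ∑ j, V j ω) ∂μ := by
        congr 1 with ω; ring
    _ = _ := by
      rw [integral_sub (hdiag.const_mul _) (hcross.const_mul _), integral_const_mul,
        integral_const_mul, integral_sum_mul_of_identDistrib hident hUV₀,
        integral_sum_mul_sum_of_identDistrib_of_indepFun hident hindep hU₀ hV₀ hUV₀, ← hn]
      field_simp
      ring

end SampleCovariance

theorem unbiased_c3_f {Ω : Type*} [MeasurableSpace Ω] (μ : Measure Ω) [IsProbabilityMeasure μ]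
    (m : ℕ) (hm : 2 ≤ m)
    (X Y Z : Fin m → Ω → ℝ)
    (hindep : iIndepFun (fun i ω => (X i ω, Y i ω, Z i ω)) μ)
    (hident : ∀ i, IdentDistrib (fun ω => (X i ω, Y i ω, Z i ω)) (fun ω => (X ⟨0, by omega⟩ ω, Y ⟨0, by omega⟩ ω, Z ⟨0, by omega⟩ ω)) μ μ)
    (hX3 : MemLp (X ⟨0, by omega⟩) 3 μ)
    (hY3 : MemLp (Y ⟨0, by omega⟩) 3 μ)
    (hZ3 : MemLp (Z ⟨0, by omega⟩) 3 μ)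
    (hEX : (∫ ω, X ⟨0, by omega⟩ ω ∂μ) = 0)
    (hEY : (∫ ω, Y ⟨0, by omega⟩ ω ∂μ) = 0) :
    (∫ ω, ((m:ℝ) / ((m:ℝ)-1)) * (((m:ℝ)⁻¹ * ∑ i, X i ω * Y i ω * Z i ω) - ((m:ℝ)⁻¹ * ∑ i, X i ω * Y i ω) * ((m:ℝ)⁻¹ * ∑ i, Z i ω)) ∂μ) = (∫ ω, X ⟨0, by omega⟩ ω * Y ⟨0, by omega⟩ ω * Z ⟨0, by omega⟩ ω ∂μ) - (∫ ω, X ⟨0, by omega⟩ ω * Y ⟨0, by omega⟩ ω ∂μ) * (∫ ω, Z ⟨0, by omega⟩ ω ∂μ) ∧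
    (∫ ω, X ⟨0, by omega⟩ ω * Y ⟨0, by omega⟩ ω * Z ⟨0, by omega⟩ ω ∂μ) - (∫ ω, X ⟨0, by omega⟩ ω * Y ⟨0, by omega⟩ ω ∂μ) * (∫ ω, Z ⟨0, by omega⟩ ω ∂μ) = (∫ ω, X ⟨0, by omega⟩ ω * Y ⟨0, by omega⟩ ω * Z ⟨0, by omega⟩ ω ∂μ) - (∫ ω, X ⟨0, by omega⟩ ω * Y ⟨0, by omega⟩ ω ∂μ) * (∫ ω, Z ⟨0, by omega⟩ ω ∂μ) - (∫ ω, X ⟨0, by omega⟩ ω * Z ⟨0, by omega⟩ ω ∂μ) * (∫ ω, Y ⟨0, by omega⟩ ω ∂μ) - (∫ ω, Y ⟨0, by omega⟩ ω * Z ⟨0, by omega⟩ ω ∂μ) * (∫ ω, X ⟨0, by omega⟩ ω ∂μ) + 2 * (∫ ω, X ⟨0, by omega⟩ ω ∂μ) * (∫ ω, Y ⟨0, by omega⟩ ω ∂μ) * (∫ ω, Z ⟨0, by omega⟩ ω ∂μ) := by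
  refine ⟨?_, by rw [hEX, hEY]; ring⟩
  have hsplit : Measurable fun p : ℝ × ℝ × ℝ => (p.1 * p.2.1, p.2.2) := by fun_prop
  have hpair (i : Fin m) : IdentDistrib (fun ω => (X i ω * Y i ω, Z i ω))
      (fun ω => (X ⟨0, by omega⟩ ω * Y ⟨0, by omega⟩ ω, Z ⟨0, by omega⟩ ω)) μ μ :=
    (hident i).comp hsplit
  have hcross : Pairwise fun i j => IndepFun (fun ω => X i ω * Y i ω) (Z j) μ :=
    fun i j hij => (hindep.indepFun hij).comp (measurable_fst.mul measurable_snd.fst)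
      measurable_snd.snd
  have h := integral_unbiased_sample_covariance hpair hcross (hX3.integrable_mul_of_three hY3)
    (hZ3.integrable (by norm_num)) (hX3.integrable_mul_mul_of_three hY3 hZ3)
    (by rwa [Fintype.card_fin])
  rwa [Fintype.card_fin] at h
end
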